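/- arXiv:1706.04457 — 4 statements merged into one kernel-verified Lean document; each statement's English description precedes it below -/
import Mathlib

section
/- For a suspension of elastic hard spheres in the ignited state with η² = (9+ΩSt²)/(4(1+(29/84)ΩSt²+(1/36)Ω²St⁴)) and λ² = (7+ΩSt²)/(14(1+(29/84)ΩSt²+(1/36)Ω²St⁴)), the first normal-stress difference N₁ = 18/(6+ΩSt²) and the second normal-stress difference satisfies −N₂ = 9(9+ΩSt²)ΩSt²/((6+ΩSt²)(252+87ΩSt²+7Ω²St⁴)) with N₁ = 2η sin 2φ, N₂ = 3λ² − N₁/2, and sin 2φ = η/(1+λ²). -/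
open Real

/-!
Write `x = Ω St²` and `D = 1 + (29/84)x + (1/36)x²`. The whole computation rests on the
factorisation `36 D + (18/7)(7 + x) = (6 + x)(9 + x)`, i.e. `1 + λ² = (6 + x)(9 + x)/(36 D)`:
since `N₁ = 2η sin 2φ = 2η²/(1 + λ²)`, the factor `9 + x` of `η²` cancels and `N₁ = 18/(6 + x)`.
Then `-N₂ = N₁/2 - 3λ²`, and with `252 D = 252 + 87x + 7x²` the numerator is
`9(252 + 87x + 7x²) - 54(6 + x)(7 + x) = 9x(9 + x)`.
-/

noncomputable def elasticDenom (x : ℝ) : ℝ := 1 + 29 / 84 * x + 1 / 36 * x ^ 2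

section

variable {x : ℝ}

lemma elasticDenom_pos (hx : 0 ≤ x) : 0 < elasticDenom x := by
  unfold elasticDenom; positivity

lemma one_add_elastic_lamsq (hx : 0 ≤ x) :
    1 + (7 + x) / (14 * elasticDenom x) = (6 + x) * (9 + x) / (36 * elasticDenom x) := by
  have := elasticDenom_pos hx
  field_simp
  unfold elasticDenom
  ring

lemma elastic_N1_eq (hx : 0 ≤ x) :
    2 * ((9 + x) / (4 * elasticDenom x)) / ((6 + x) * (9 + x) / (36 * elasticDenom x)) =
      18 / (6 + x) := by
  have := elasticDenom_pos hx
  have h6 : 6 + x ≠ 0 := by positivity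
  have h9 : 9 + x ≠ 0 := by positivity
  field_simp
  ring

lemma elastic_neg_N2_eq (hx : 0 ≤ x) :
    18 / (6 + x) / 2 - 3 * ((7 + x) / (14 * elasticDenom x)) =
      9 * (9 + x) * x / ((6 + x) * (252 + 87 * x + 7 * x ^ 2)) := by
  have := elasticDenom_pos hx
  have h6 : 6 + x ≠ 0 := by positivity
  have hP : 252 + 87 * x + 7 * x ^ 2 ≠ 0 := by positivity
  field_simp
  unfold elasticDenom
  ring

end

theorem normal_stress_differences_elastic_general (St Ω eta etasq lamsq sin2phi N1 N2 : ℝ)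
    (hΩ0 : 0 < Ω)
    (hetasq : etasq = (9 + Ω * St ^ 2) /
      (4 * (1 + (29 / 84) * Ω * St ^ 2 + (1 / 36) * Ω ^ 2 * St ^ 4)))
    (heta : eta ^ 2 = etasq)
    (hlamsq : lamsq = (7 + Ω * St ^ 2) /
      (14 * (1 + (29 / 84) * Ω * St ^ 2 + (1 / 36) * Ω ^ 2 * St ^ 4)))
    (hsin : sin2phi = eta / (1 + lamsq))
    (hN1 : N1 = 2 * eta * sin2phi)
    (hN2 : N2 = 3 * lamsq - N1 / 2) :
    N1 = 18 / (6 + Ω * St ^ 2) ∧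
    -N2 = 9 * (9 + Ω * St ^ 2) * (Ω * St ^ 2) /
      ((6 + Ω * St ^ 2) * (252 + 87 * Ω * St ^ 2 + 7 * Ω ^ 2 * St ^ 4)) := by
  have hx : 0 ≤ Ω * St ^ 2 := by positivity
  have hD : 1 + (29 / 84) * Ω * St ^ 2 + (1 / 36) * Ω ^ 2 * St ^ 4 = elasticDenom (Ω * St ^ 2) := by
    unfold elasticDenom; ring
  have hP : 252 + 87 * Ω * St ^ 2 + 7 * Ω ^ 2 * St ^ 4 =
      252 + 87 * (Ω * St ^ 2) + 7 * (Ω * St ^ 2) ^ 2 := by ring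
  rw [hD] at hetasq hlamsq
  have hN1_eq : N1 = 18 / (6 + Ω * St ^ 2) := by
    calc N1 = 2 * etasq / (1 + lamsq) := by rw [hN1, hsin, ← heta]; ring
      _ = 18 / (6 + Ω * St ^ 2) := by
        rw [hetasq, hlamsq, one_add_elastic_lamsq hx, elastic_N1_eq hx]
  refine ⟨hN1_eq, ?_⟩
  rw [hN2, hN1_eq, hlamsq, hP, neg_sub]
  exact elastic_neg_N2_eq hx

/-- For the ignited state of an elastic hard-sphere suspension, with
η² = (9+ΩSt²)/(4(1+(29/84)ΩSt²+(1/36)Ω²St⁴)),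
λ² = (7+ΩSt²)/(14(1+(29/84)ΩSt²+(1/36)Ω²St⁴)),
sin 2φ = η/(1+λ²), N₁ = 2η sin 2φ and N₂ = 3λ² − N₁/2, one has
N₁ = 18/(6+ΩSt²) and
−N₂ = 9(9+ΩSt²)ΩSt²/((6+ΩSt²)(252+87ΩSt²+7Ω²St⁴)). -/
theorem normal_stress_differences_elastic (St Ω eta etasq lamsq sin2phi N1 N2 : ℝ)
    (hSt : Real.sqrt (171 / 7) ≤ St) (hΩ0 : 0 < Ω) (hΩ1 : Ω ≤ 1)
    (hetasq : etasq = (9 + Ω * St ^ 2) /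
      (4 * (1 + (29 / 84) * Ω * St ^ 2 + (1 / 36) * Ω ^ 2 * St ^ 4)))
    (heta : eta ^ 2 = etasq) (heta0 : 0 ≤ eta)
    (hlamsq : lamsq = (7 + Ω * St ^ 2) /
      (14 * (1 + (29 / 84) * Ω * St ^ 2 + (1 / 36) * Ω ^ 2 * St ^ 4)))
    (hsin : sin2phi = eta / (1 + lamsq))
    (hN1 : N1 = 2 * eta * sin2phi)
    (hN2 : N2 = 3 * lamsq - N1 / 2) :
    N1 = 18 / (6 + Ω * St ^ 2) ∧
    -N2 = 9 * (9 + Ω * St ^ 2) * (Ω * St ^ 2) /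
      ((6 + Ω * St ^ 2) * (252 + 87 * Ω * St ^ 2 + 7 * Ω ^ 2 * St ^ 4)) :=
  normal_stress_differences_elastic_general St Ω eta etasq lamsq sin2phi N1 N2 hΩ0 hetasq heta
    hlamsq hsin hN1 hN2
end

section
/- Consider the cubic a₄ξ³ + a₃ξ² + a₁ = 0 with a₄ = −6890625(1+e)(107+193e)π⁴St⁴ν, a₃ = 5788125000π^{9/2}St, a₁ = −196000000(1+e)²π^{7/2}St⁴ν, together with the double-root condition 3a₄ξ² + 2a₃ξ = 0. Then the nonzero critical point is ξ_c = −2a₃/(3a₄) = 560√π/((1+e)(107+193e)St³ν), and substituting back yields the critical-surface relation St³ν = (3087000π²/((1+e)⁴(107+193e)²))^{1/3}. -/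
/-!
At the double root ξ_c = −2a₃/(3a₄) the cubic a₄ξ³ + a₃ξ² + a₁ takes the value
(4a₃³ + 27a₄²a₁)/(27a₄²), so the saddle-node condition is the vanishing of the
discriminant-type quantity 4a₃³ + 27a₄²a₁. For the given coefficients this quantity is
a positive multiple of 3087000π² − (1+e)⁴(107+193e)²(St³ν)³, and St³ν is its positive
real cube root.
-/

open Real

section CubicCriticalPoint

variable {K : Type*} [Field K] [CharZero K] {a b c x : K}

theorem cubic_deriv_eq_zero_of_eq_critical (ha : a ≠ 0) (hx : x = -2 * b / (3 * a)) :
    3 * a * x ^ 2 + 2 * b * x = 0 := by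
  subst hx
  field_simp
  ring

theorem cubic_eval_critical (ha : a ≠ 0) (hx : x = -2 * b / (3 * a)) :
    a * x ^ 3 + b * x ^ 2 + c = (4 * b ^ 3 + 27 * a ^ 2 * c) / (27 * a ^ 2) := by
  subst hx
  field_simp
  ring

theorem discriminant_eq_zero_of_root_at_critical (ha : a ≠ 0) (hx : x = -2 * b / (3 * a))
    (hroot : a * x ^ 3 + b * x ^ 2 + c = 0) :
    4 * b ^ 3 + 27 * a ^ 2 * c = 0 := by
  rw [cubic_eval_critical ha hx, div_eq_zero_iff] at hroot
  exact hroot.resolve_right (mul_ne_zero (by norm_num) (pow_ne_zero 2 ha))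

end CubicCriticalPoint

theorem Real.eq_rpow_one_div_of_pow_eq {x y : ℝ} {n : ℕ} (hx : 0 ≤ x) (hn : n ≠ 0)
    (h : x ^ n = y) :
    x = y ^ ((1 : ℝ) / n) := by
  rw [← h, one_div, pow_rpow_inv_natCast hx hn]

theorem critical_surface_general (St ν e a4 a3 a1 ξc : ℝ)
    (hSt : 0 < St) (hν : 0 < ν) (he0 : 0 ≤ e)
    (ha4 : a4 = -6890625 * (1 + e) * (107 + 193 * e) * π ^ 4 * St ^ 4 * ν)
    (ha3 : a3 = 5788125000 * π ^ 4 * Real.sqrt π * St)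
    (ha1 : a1 = -196000000 * (1 + e) ^ 2 * π ^ 3 * Real.sqrt π * St ^ 4 * ν)
    (hξc : ξc = -2 * a3 / (3 * a4))
    (hroot : a4 * ξc ^ 3 + a3 * ξc ^ 2 + a1 = 0) :
    ξc = 560 * Real.sqrt π / ((1 + e) * (107 + 193 * e) * St ^ 3 * ν) ∧
    3 * a4 * ξc ^ 2 + 2 * a3 * ξc = 0 ∧
    St ^ 3 * ν = (3087000 * π ^ 2 / ((1 + e) ^ 4 * (107 + 193 * e) ^ 2))
      ^ ((1 : ℝ) / 3) := by
  have hsq : √π ^ 2 = π := sq_sqrt pi_pos.le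
  have ha4_ne : a4 ≠ 0 := by
    have : 0 < (1 + e) * (107 + 193 * e) * π ^ 4 * St ^ 4 * ν := by positivity
    exact (show a4 < 0 by linarith).ne
  have hdisc := discriminant_eq_zero_of_root_at_critical ha4_ne hξc hroot
  rw [ha4, ha3, ha1] at hdisc
  have hcube : (St ^ 3 * ν) ^ 3 = 3087000 * π ^ 2 / ((1 + e) ^ 4 * (107 + 193 * e) ^ 2) := by
    rw [eq_div_iff (by positivity)]
    have hD : 27 * 6890625 ^ 2 * 196000000 * π ^ 11 * √π * St ^ 3 ≠ 0 := by positivity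
    apply mul_left_cancel₀ hD
    -- `hdisc` is the goal times this factor, once `√π ^ 3` is rewritten as `π * √π`
    linear_combination -hdisc + 4 * 5788125000 ^ 3 * π ^ 12 * √π * St ^ 3 * hsq
  refine ⟨?_, cubic_deriv_eq_zero_of_eq_critical ha4_ne hξc,
    eq_rpow_one_div_of_pow_eq (by positivity) three_ne_zero hcube |>.trans (by norm_num)⟩
  rw [hξc, div_eq_div_iff (mul_ne_zero three_ne_zero ha4_ne) (by positivity), ha3, ha4]
  ring

/-- For the cubic a₄ξ³ + a₃ξ² + a₁ = 0 with
a₄ = −6890625(1+e)(107+193e)π⁴St⁴ν, a₃ = 5788125000π^{9/2}St and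
a₁ = −196000000(1+e)²π^{7/2}St⁴ν, together with the double-root condition
3a₄ξ² + 2a₃ξ = 0, the nonzero critical point is
ξ_c = −2a₃/(3a₄) = 560√π/((1+e)(107+193e)St³ν), and substituting back yields the
critical surface St³ν = (3087000π²/((1+e)⁴(107+193e)²))^{1/3}. -/
theorem critical_surface (St ν e a4 a3 a1 ξc : ℝ)
    (hSt : 0 < St) (hν : 0 < ν) (he0 : 0 ≤ e) (he1 : e ≤ 1)
    (ha4 : a4 = -6890625 * (1 + e) * (107 + 193 * e) * π ^ 4 * St ^ 4 * ν)
    (ha3 : a3 = 5788125000 * π ^ 4 * Real.sqrt π * St)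
    (ha1 : a1 = -196000000 * (1 + e) ^ 2 * π ^ 3 * Real.sqrt π * St ^ 4 * ν)
    (hξc : ξc = -2 * a3 / (3 * a4))
    (hroot : a4 * ξc ^ 3 + a3 * ξc ^ 2 + a1 = 0) :
    ξc = 560 * Real.sqrt π / ((1 + e) * (107 + 193 * e) * St ^ 3 * ν) ∧
    3 * a4 * ξc ^ 2 + 2 * a3 * ξc = 0 ∧
    St ^ 3 * ν = (3087000 * π ^ 2 / ((1 + e) ^ 4 * (107 + 193 * e) ^ 2))
      ^ ((1 : ℝ) / 3) :=
  critical_surface_general St ν e a4 a3 a1 ξc hSt hν he0 ha4 ha3 ha1 hξc hroot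
end

section
/- Suppose the traceless part of the collisional source satisfies ℵ_{⟨αβ⟩} = B·P_{⟨αβ⟩} for some scalar B ≠ 0, and the steady uniform-shear second-moment balance P_{δβ}u_{α,δ} + P_{δα}u_{β,δ} = ℵ_{αβ} holds with velocity field u = (γ̇y, 0, 0). Then ℵ₂₂ = 0 = ℵ₃₃, and consequently the second normal-stress difference N₂ = P_{⟨22⟩} − P_{⟨33⟩} = 0. -/
open Matrix

/-!
For the simple-shear gradient only the first row of `G` is nonzero, so the diagonal entries
`2 (G P)ᵢᵢ` of the production tensor vanish for `i = 2, 3` (`1, 2 : Fin 3`); hence `ℵ₂₂ = ℵ₃₃ = 0`. Since the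
isotropic part contributes equally to every diagonal entry and `B ≠ 0`, equal diagonal entries
of `ℵ` force equal diagonal entries of the deviatoric stress, which is `N₂ = 0`.
-/

namespace Matrix

variable {n R : Type*}

theorem mul_add_transpose_apply_self_of_row_eq_zero [Fintype n] [NonUnitalNonAssocSemiring R]
    {G : Matrix n n R} (P : Matrix n n R) {i : n} (hG : ∀ j, G i j = 0) :
    (G * P + (G * P)ᵀ) i i = 0 := by
  simp [mul_apply, hG]

theorem apply_self_eq_of_eq_smul_one_add_smul [DecidableEq n] [Ring R] [IsDomain R]
    {A D : Matrix n n R} {c B : R} (hB : B ≠ 0) (hA : A = c • 1 + B • D) {i j : n}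
    (hij : A i i = A j j) : D i i = D j j := by
  subst hA
  simp only [add_apply, smul_apply, one_apply_eq, smul_eq_mul, add_right_inj] at hij
  exact mul_left_cancel₀ hB hij

end Matrix

theorem N2_vanishes_for_linear_source_general (γ B : ℝ) (hB : B ≠ 0)
    (P ℵ G : Matrix (Fin 3) (Fin 3) ℝ)
    (hG : G = Matrix.of ![![0, γ, 0], ![0, 0, 0], ![0, 0, 0]])
    (hdecomp : ℵ = (Matrix.trace ℵ / 3) • (1 : Matrix (Fin 3) (Fin 3) ℝ) +
      B • (P - (Matrix.trace P / 3) • (1 : Matrix (Fin 3) (Fin 3) ℝ)))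
    (hbalance : G * P + (G * P)ᵀ = ℵ) :
    ℵ 1 1 = 0 ∧ ℵ 2 2 = 0 ∧
    (P - (Matrix.trace P / 3) • (1 : Matrix (Fin 3) (Fin 3) ℝ)) 1 1 -
      (P - (Matrix.trace P / 3) • (1 : Matrix (Fin 3) (Fin 3) ℝ)) 2 2 = 0 := by
  have hrow₁ : ∀ j, G 1 j = 0 := by intro j; fin_cases j <;> simp [hG]
  have hrow₂ : ∀ j, G 2 j = 0 := by intro j; fin_cases j <;> simp [hG]
  have h₁₁ : ℵ 1 1 = 0 := hbalance ▸ mul_add_transpose_apply_self_of_row_eq_zero P hrow₁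
  have h₂₂ : ℵ 2 2 = 0 := hbalance ▸ mul_add_transpose_apply_self_of_row_eq_zero P hrow₂
  refine ⟨h₁₁, h₂₂, sub_eq_zero.mpr ?_⟩
  exact apply_self_eq_of_eq_smul_one_add_smul hB hdecomp (h₁₁.trans h₂₂.symm)

/-- If the traceless part of the collisional source satisfies ℵ_{⟨αβ⟩} = B·P_{⟨αβ⟩}
with B ≠ 0, and the steady uniform-shear second-moment balance
P_{δβ}u_{α,δ} + P_{δα}u_{β,δ} = ℵ_{αβ} holds for the velocity field u = (γ̇y, 0, 0),
then ℵ₂₂ = 0 = ℵ₃₃ and the second normal-stress difference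
N₂ = P_{⟨22⟩} − P_{⟨33⟩} vanishes. -/
theorem N2_vanishes_for_linear_source (γ B : ℝ) (hB : B ≠ 0)
    (P ℵ G : Matrix (Fin 3) (Fin 3) ℝ)
    (hPsymm : Pᵀ = P)
    (hG : G = Matrix.of ![![0, γ, 0], ![0, 0, 0], ![0, 0, 0]])
    (hdecomp : ℵ = (Matrix.trace ℵ / 3) • (1 : Matrix (Fin 3) (Fin 3) ℝ) +
      B • (P - (Matrix.trace P / 3) • (1 : Matrix (Fin 3) (Fin 3) ℝ)))
    (hbalance : G * P + (G * P)ᵀ = ℵ) :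
    ℵ 1 1 = 0 ∧ ℵ 2 2 = 0 ∧
    (P - (Matrix.trace P / 3) • (1 : Matrix (Fin 3) (Fin 3) ℝ)) 1 1 -
      (P - (Matrix.trace P / 3) • (1 : Matrix (Fin 3) (Fin 3) ℝ)) 2 2 = 0 :=
  N2_vanishes_for_linear_source_general γ B hB P ℵ G hG hdecomp hbalance
end

section
/- The quadratic 𝔞η⁴ + 𝔟η² + 𝔠 = 0 in η² with 𝔞 = 9(1−e²)²ν²T³/(25π) > 0, 𝔠 = (3T/St − 16ν(1+e)²/(35π) + 6(1−e²)νT^{3/2}/√π)² ≥ 0 and 𝔟 ≤ −T²cos²2φ + (terms) has the root η² = −𝔟/(2𝔞) − (1/(2𝔞))√(𝔟² − 4𝔞𝔠); for e = 1 (so 𝔞 = 0, 𝔟 = −T²cos²2φ) the solution degenerates to η² = −𝔠/𝔟 = (3T/St − 64ν/(35π))²T^{−2}sec²2φ, which is strictly positive whenever 3T/St ≠ 64ν/(35π) and cos 2φ ≠ 0. -/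
open Real

/-!
For `e < 1` the leading coefficient `𝔞` is positive, so the claim is the quadratic formula.
For `e = 1` the factor `1 - e²` kills `𝔞` and the first summand of `𝔟`, the quadratic becomes
linear, `𝔟 = -T² cos² 2φ`, `𝔠 = (3T/St - 64ν/(35π))²`, and `η² = -𝔠/𝔟` is checked directly.
-/

theorem quadratic_eq_zero_of_sub_sqrt_discrim {a b c : ℝ} (ha : a ≠ 0)
    (hD : 0 ≤ b ^ 2 - 4 * a * c) :
    a * (-b / (2 * a) - √(b ^ 2 - 4 * a * c) / (2 * a)) ^ 2 +
      b * (-b / (2 * a) - √(b ^ 2 - 4 * a * c) / (2 * a)) + c = 0 := by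
  have hdiscrim : discrim a b c = √(b ^ 2 - 4 * a * c) * √(b ^ 2 - 4 * a * c) := by
    rw [mul_self_sqrt hD, discrim]
  rw [← sub_div, sq, quadratic_eq_zero_iff ha hdiscrim]
  exact Or.inr rfl

theorem neg_sq_mul_sq_mul_div_add_eq_zero {T C X : ℝ} (hT : T ≠ 0) (hC : C ≠ 0) :
    -(T ^ 2 * C ^ 2) * (X ^ 2 * T⁻¹ ^ 2 / C ^ 2) + X ^ 2 = 0 := by
  field_simp
  ring

theorem temperature_anisotropy_quadratic_general (T St ν e φ 𝔞 𝔟 𝔠 : ℝ)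
    (hT : 0 < T) (hν : 0 < ν) (he0 : 0 ≤ e)
    (ha : 𝔞 = 9 * (1 - e ^ 2) ^ 2 * ν ^ 2 * T ^ 3 / (25 * π))
    (hb : 𝔟 = (6 * (1 - e ^ 2) * ν * T ^ (3 / 2 : ℝ) / (5 * Real.sqrt π)) *
      (3 * T / St - 16 * ν * (1 + e) ^ 2 / (35 * π) +
        6 * (1 - e ^ 2) * ν * T ^ (3 / 2 : ℝ) / Real.sqrt π) -
      T ^ 2 * Real.cos (2 * φ) ^ 2)
    (hc : 𝔠 = (3 * T / St - 16 * ν * (1 + e) ^ 2 / (35 * π) +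
      6 * (1 - e ^ 2) * ν * T ^ (3 / 2 : ℝ) / Real.sqrt π) ^ 2) :
    (e < 1 → 0 ≤ 𝔟 ^ 2 - 4 * 𝔞 * 𝔠 →
      𝔞 * (-𝔟 / (2 * 𝔞) - Real.sqrt (𝔟 ^ 2 - 4 * 𝔞 * 𝔠) / (2 * 𝔞)) ^ 2 +
        𝔟 * (-𝔟 / (2 * 𝔞) - Real.sqrt (𝔟 ^ 2 - 4 * 𝔞 * 𝔠) / (2 * 𝔞)) + 𝔠 = 0) ∧
    (e = 1 →
      𝔞 = 0 ∧ 𝔟 = -(T ^ 2 * Real.cos (2 * φ) ^ 2) ∧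
      (Real.cos (2 * φ) ≠ 0 →
        𝔟 * ((3 * T / St - 64 * ν / (35 * π)) ^ 2 * T⁻¹ ^ 2 / Real.cos (2 * φ) ^ 2) +
          𝔠 = 0 ∧
        (3 * T / St ≠ 64 * ν / (35 * π) →
          0 < (3 * T / St - 64 * ν / (35 * π)) ^ 2 * T⁻¹ ^ 2 /
            Real.cos (2 * φ) ^ 2))) := by
  refine ⟨fun he hD => ?_, fun he => ?_⟩
  · have hinelastic : 0 < 1 - e ^ 2 := by nlinarith
    have ha_pos : 0 < 𝔞 := by rw [ha]; positivity
    exact quadratic_eq_zero_of_sub_sqrt_discrim ha_pos.ne' hD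
  · subst he
    have ha' : 𝔞 = 0 := by rw [ha]; norm_num
    have hb' : 𝔟 = -(T ^ 2 * Real.cos (2 * φ) ^ 2) := by rw [hb]; norm_num
    have hc' : 𝔠 = (3 * T / St - 64 * ν / (35 * π)) ^ 2 := by rw [hc]; ring
    refine ⟨ha', hb', fun hcos => ⟨?_, fun hne => ?_⟩⟩
    · rw [hb', hc']
      exact neg_sq_mul_sq_mul_div_add_eq_zero hT.ne' hcos
    · have hsource : 3 * T / St - 64 * ν / (35 * π) ≠ 0 := sub_ne_zero.mpr hne
      positivity

/-- The quadratic 𝔞η⁴ + 𝔟η² + 𝔠 = 0 in η², with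
𝔞 = 9(1−e²)²ν²T³/(25π), 𝔠 = (3T/St − 16ν(1+e)²/(35π) + 6(1−e²)νT^{3/2}/√π)² and
𝔟 = (6(1−e²)νT^{3/2}/(5√π))(3T/St − 16ν(1+e)²/(35π) + 6(1−e²)νT^{3/2}/√π) − T²cos²2φ,
has the root η² = −𝔟/(2𝔞) − (1/(2𝔞))√(𝔟²−4𝔞𝔠) when e < 1 and the discriminant is
nonnegative; for e = 1 (so 𝔞 = 0, 𝔟 = −T²cos²2φ) the solution degenerates to
η² = −𝔠/𝔟 = (3T/St − 64ν/(35π))²T⁻²sec²2φ, strictly positive whenever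
3T/St ≠ 64ν/(35π) and cos 2φ ≠ 0. -/
theorem temperature_anisotropy_quadratic (T St ν e φ 𝔞 𝔟 𝔠 : ℝ)
    (hT : 0 < T) (hSt : 0 < St) (hν : 0 < ν) (he0 : 0 ≤ e) (he1 : e ≤ 1)
    (ha : 𝔞 = 9 * (1 - e ^ 2) ^ 2 * ν ^ 2 * T ^ 3 / (25 * π))
    (hb : 𝔟 = (6 * (1 - e ^ 2) * ν * T ^ (3 / 2 : ℝ) / (5 * Real.sqrt π)) *
      (3 * T / St - 16 * ν * (1 + e) ^ 2 / (35 * π) +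
        6 * (1 - e ^ 2) * ν * T ^ (3 / 2 : ℝ) / Real.sqrt π) -
      T ^ 2 * Real.cos (2 * φ) ^ 2)
    (hc : 𝔠 = (3 * T / St - 16 * ν * (1 + e) ^ 2 / (35 * π) +
      6 * (1 - e ^ 2) * ν * T ^ (3 / 2 : ℝ) / Real.sqrt π) ^ 2) :
    (e < 1 → 0 ≤ 𝔟 ^ 2 - 4 * 𝔞 * 𝔠 →
      𝔞 * (-𝔟 / (2 * 𝔞) - Real.sqrt (𝔟 ^ 2 - 4 * 𝔞 * 𝔠) / (2 * 𝔞)) ^ 2 +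
        𝔟 * (-𝔟 / (2 * 𝔞) - Real.sqrt (𝔟 ^ 2 - 4 * 𝔞 * 𝔠) / (2 * 𝔞)) + 𝔠 = 0) ∧
    (e = 1 →
      𝔞 = 0 ∧ 𝔟 = -(T ^ 2 * Real.cos (2 * φ) ^ 2) ∧
      (Real.cos (2 * φ) ≠ 0 →
        𝔟 * ((3 * T / St - 64 * ν / (35 * π)) ^ 2 * T⁻¹ ^ 2 / Real.cos (2 * φ) ^ 2) +
          𝔠 = 0 ∧
        (3 * T / St ≠ 64 * ν / (35 * π) →
          0 < (3 * T / St - 64 * ν / (35 * π)) ^ 2 * T⁻¹ ^ 2 /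
            Real.cos (2 * φ) ^ 2))) :=
  temperature_anisotropy_quadratic_general T St ν e φ 𝔞 𝔟 𝔠 hT hν he0 ha hb hc
end
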